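/- arXiv:1206.0631 — 3 statements merged into one kernel-verified Lean document; each statement's English description precedes it below -/
import Mathlib

section
/- For any 3×3 real matrix P with third row zero, Tr(Pᵀ · T′(P)) ≥ 0, where T′(P) = P + Pᵀ − Tr(P)·I; equality holds if and only if p_{11} = p_{22}, p_{12} = −p_{21}, and p_{13} = p_{23} = 0. -/
open Matrix

theorem trace_transpose_mul_sub_trace_smul_one_of_row_two_eq_zero
    (P : Matrix (Fin 3) (Fin 3) ℝ) (h3 : ∀ j, P 2 j = 0) :
    (Pᵀ * (P + Pᵀ - P.trace • (1 : Matrix (Fin 3) (Fin 3) ℝ))).trace =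
      (P 0 0 - P 1 1) ^ 2 + (P 0 1 + P 1 0) ^ 2 + P 0 2 ^ 2 + P 1 2 ^ 2 := by
  simp [trace, mul_apply, Fin.sum_univ_three, one_apply, h3]
  ring

/-- For a 3×3 matrix `P` with zero third row, `Tr(Pᵀ · T′(P)) ≥ 0`, with equality
iff `p₁₁ = p₂₂`, `p₁₂ = −p₂₁`, `p₁₃ = p₂₃ = 0`, where `T′(P) = P + Pᵀ − Tr(P)·I`. -/
theorem stmt9 (P : Matrix (Fin 3) (Fin 3) ℝ) (h3 : ∀ j, P 2 j = 0) :
    0 ≤ (Pᵀ * (P + Pᵀ - P.trace • (1 : Matrix (Fin 3) (Fin 3) ℝ))).trace ∧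
      ((Pᵀ * (P + Pᵀ - P.trace • (1 : Matrix (Fin 3) (Fin 3) ℝ))).trace = 0 ↔
        (P 0 0 = P 1 1 ∧ P 0 1 = -P 1 0 ∧ P 0 2 = 0 ∧ P 1 2 = 0)) := by
  rw [trace_transpose_mul_sub_trace_smul_one_of_row_two_eq_zero P h3]
  refine ⟨by positivity, ?_⟩
  rw [add_eq_zero_iff_of_nonneg (by positivity) (by positivity),
    add_eq_zero_iff_of_nonneg (by positivity) (by positivity),
    add_eq_zero_iff_of_nonneg (by positivity) (by positivity)]
  simp only [pow_eq_zero_iff two_ne_zero, sub_eq_zero, add_eq_zero_iff_eq_neg, and_assoc]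
end

section
/- Every 3×3 real matrix P of rank at most 2 satisfies Tr(Pᵀ T′(P)) ≥ 0, where T′(P) = P + Pᵀ − Tr(P)·I. -/
/-!
With `S = P + Pᵀ` one has `4 Tr(Pᵀ T′(P)) = 2 Tr(S²) - (Tr S)²`. If this were negative,
Cauchy–Schwarz on the eigenvalues of `S` would force all of them to have the sign of `Tr S`, so `S`
would be definite. But `P` is singular, and a nonzero `v` with `P v = 0` gives
`vᵀ S v = 2 vᵀ P v = 0`.
-/

open Matrix

open Finset in
/-- Cauchy–Schwarz on the `card ι - 1` values other than `μ k`, whose sum is at least `∑ i, μ i`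
when `μ k ≤ 0`. -/
lemma pos_of_card_sub_one_mul_sum_sq_lt_sq_sum {ι : Type*} [Fintype ι] {μ : ι → ℝ}
    (h : (Fintype.card ι - 1 : ℝ) * ∑ i, μ i ^ 2 < (∑ i, μ i) ^ 2) (hs : 0 ≤ ∑ i, μ i)
    (k : ι) : 0 < μ k := by
  classical
  by_contra! hk
  have hcard : ((univ.erase k).card : ℝ) = Fintype.card ι - 1 := by
    rw [card_erase_of_mem (mem_univ k), Nat.cast_sub (card_pos.mpr ⟨k, mem_univ k⟩),
      card_univ, Nat.cast_one]
  have hcard_nonneg : (0 : ℝ) ≤ Fintype.card ι - 1 := by rw [← hcard]; positivity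
  have hsum := add_sum_erase univ μ (mem_univ k)
  have hsq := add_sum_erase univ (fun i ↦ μ i ^ 2) (mem_univ k)
  have : (∑ i, μ i) ^ 2 ≤ (Fintype.card ι - 1 : ℝ) * ∑ i, μ i ^ 2 :=
    calc (∑ i, μ i) ^ 2 ≤ (∑ i ∈ univ.erase k, μ i) ^ 2 := pow_le_pow_left₀ hs (by linarith) 2
      _ ≤ (univ.erase k).card * ∑ i ∈ univ.erase k, μ i ^ 2 := sq_sum_le_card_mul_sum_sq
      _ ≤ (Fintype.card ι - 1 : ℝ) * ∑ i, μ i ^ 2 := by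
        rw [hcard]
        exact mul_le_mul_of_nonneg_left (by linarith [sq_nonneg (μ k)]) hcard_nonneg
  exact (h.trans_le this).false

namespace Matrix

variable {n : Type*} [Fintype n]

lemma dotProduct_add_transpose_mulVec_eq_zero {R : Type*} [CommSemiring R]
    {P : Matrix n n R} {v : n → R} (hv : P *ᵥ v = 0) : v ⬝ᵥ (P + Pᵀ) *ᵥ v = 0 := by
  rw [add_mulVec, hv, zero_add, dotProduct_mulVec, vecMul_transpose, hv, zero_dotProduct]

variable [DecidableEq n]

lemma four_mul_trace_transpose_mul_add_transpose_sub_trace_smul {R : Type*} [CommRing R]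
    (P : Matrix n n R) :
    4 * (Pᵀ * (P + Pᵀ - P.trace • (1 : Matrix n n R))).trace
      = 2 * ((P + Pᵀ) * (P + Pᵀ)).trace - (P + Pᵀ).trace ^ 2 := by
  have h₁ : (P * Pᵀ).trace = (Pᵀ * P).trace := trace_mul_comm _ _
  have h₂ : (Pᵀ * Pᵀ).trace = (P * P).trace := by rw [← transpose_mul, trace_transpose]
  simp only [Matrix.mul_add, Matrix.add_mul, Matrix.mul_sub, Matrix.mul_smul, Matrix.mul_one,
    trace_add, trace_sub, trace_smul, trace_transpose, h₁, h₂, smul_eq_mul]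
  ring

lemma exists_mulVec_eq_zero_of_rank_lt {K : Type*} [Field K] {P : Matrix n n K}
    (h : P.rank < Fintype.card n) : ∃ v ≠ 0, P *ᵥ v = 0 := by
  refine exists_mulVec_eq_zero_iff.mpr ?_
  by_contra hdet
  exact h.ne (P.rank_of_isUnit ((isUnit_iff_isUnit_det P).mpr (Ne.isUnit hdet)))

namespace IsHermitian

variable {S : Matrix n n ℝ}

lemma trace_mul_self_eq_sum_eigenvalues_sq (hS : S.IsHermitian) :
    (S * S).trace = ∑ i, hS.eigenvalues i ^ 2 := by
  conv_lhs => rw [hS.spectral_theorem, ← map_mul, Unitary.conjStarAlgAut_apply, trace_mul_cycle,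
    Unitary.coe_star_mul_self, one_mul, diagonal_mul_diagonal, trace_diagonal]
  simp [sq]

lemma posDef_of_card_sub_one_mul_trace_mul_self_lt (hS : S.IsHermitian)
    (h : (Fintype.card n - 1 : ℝ) * (S * S).trace < S.trace ^ 2) (htr : 0 ≤ S.trace) :
    S.PosDef := by
  rw [hS.trace_mul_self_eq_sum_eigenvalues_sq] at h
  simp only [hS.trace_eq_sum_eigenvalues, RCLike.ofReal_real_eq_id, id] at h htr
  exact hS.posDef_iff_eigenvalues_pos.mpr (pos_of_card_sub_one_mul_sum_sq_lt_sq_sum h htr)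

lemma dotProduct_mulVec_ne_zero_of_card_sub_one_mul_trace_mul_self_lt (hS : S.IsHermitian)
    (h : (Fintype.card n - 1 : ℝ) * (S * S).trace < S.trace ^ 2) {v : n → ℝ} (hv : v ≠ 0) :
    v ⬝ᵥ S *ᵥ v ≠ 0 := by
  rcases le_or_gt 0 S.trace with htr | htr
  · have hpos := (hS.posDef_of_card_sub_one_mul_trace_mul_self_lt h htr).dotProduct_mulVec_pos hv
    simpa using hpos.ne'
  · have hpos := (hS.neg.posDef_of_card_sub_one_mul_trace_mul_self_lt (by simpa using h)
      (by simp [htr.le])).dotProduct_mulVec_pos hv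
    rw [neg_mulVec, dotProduct_neg, neg_pos] at hpos
    exact hpos.ne

end IsHermitian

end Matrix

/-- Every 3×3 real matrix `P` of rank at most 2 satisfies `Tr(Pᵀ T′(P)) ≥ 0`,
where `T′(P) = P + Pᵀ − Tr(P)·I`. -/
theorem stmt11 (P : Matrix (Fin 3) (Fin 3) ℝ) (hP : P.rank ≤ 2) :
    0 ≤ (Pᵀ * (P + Pᵀ - P.trace • (1 : Matrix (Fin 3) (Fin 3) ℝ))).trace := by
  by_contra! hneg
  have hS : (P + Pᵀ).IsHermitian := by simpa using isHermitian_add_transpose_self P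
  have hlt :
      (Fintype.card (Fin 3) - 1 : ℝ) * ((P + Pᵀ) * (P + Pᵀ)).trace < (P + Pᵀ).trace ^ 2 := by
    have := P.four_mul_trace_transpose_mul_add_transpose_sub_trace_smul
    rw [Fintype.card_fin, Nat.cast_ofNat]
    linarith
  obtain ⟨v, hv, hPv⟩ := P.exists_mulVec_eq_zero_of_rank_lt (by rw [Fintype.card_fin]; omega)
  exact hS.dotProduct_mulVec_ne_zero_of_card_sub_one_mul_trace_mul_self_lt hlt hv
    (dotProduct_add_transpose_mulVec_eq_zero hPv)
end

section
/- There is no nonzero symmetric fourth-order tensor T′ (i.e., T′_{ijkl} = T′_{klij}) on 3×3 matrices such that the quadratic form Tr(Pᵀ T′(P)) = Σ T′_{ijkl} P_{ij} P_{kl} vanishes for all 3×3 matrices P of rank at most 2. Equivalently, if Tr(Pᵀ T′(P)) = 0 for all rank ≤ 2 matrices P, then T′ = 0. -/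
/-! Evaluating the form at a matrix unit `E_ab` gives `T_abab`, and at `E_ab + E_cd` (rank ≤ 2)
gives `T_abab + T_abcd + T_cdab + T_cdcd = 2 T_abcd` by symmetry, so polarization kills every
entry. -/

open Matrix

variable {m n K : Type*} [Field K]

namespace Matrix

theorem rank_add_le [Fintype n] (A B : Matrix m n K) : (A + B).rank ≤ A.rank + B.rank := by
  have hrange : LinearMap.range (A + B).mulVecLin ≤
      LinearMap.range A.mulVecLin ⊔ LinearMap.range B.mulVecLin := by
    rintro _ ⟨v, rfl⟩
    rw [mulVecLin_add]
    exact Submodule.add_mem_sup ⟨v, rfl⟩ ⟨v, rfl⟩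
  exact (Submodule.finrank_mono hrange).trans
    (Submodule.finrank_add_le_finrank_add_finrank _ _)

theorem rank_single_one_le_one [Fintype n] [DecidableEq m] [DecidableEq n] (i : m) (j : n) :
    (single i j (1 : K)).rank ≤ 1 := by
  rw [single_eq_single_vecMulVec_single]
  exact rank_vecMulVec_le _ _

theorem rank_single_one_add_single_one_le_two [Fintype n] [DecidableEq m] [DecidableEq n]
    (a c : m) (b d : n) : (single a b (1 : K) + single c d 1).rank ≤ 2 :=
  (rank_add_le _ _).trans (add_le_add (rank_single_one_le_one a b) (rank_single_one_le_one c d))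

end Matrix

section TensorQuadForm

variable [Fintype m] [Fintype n] [DecidableEq m] [DecidableEq n]

def tensorQuadForm (T : m → n → m → n → K) (P : Matrix m n K) : K :=
  ∑ i, ∑ j, ∑ k, ∑ l, T i j k l * P i j * P k l

theorem tensorQuadForm_single_one (T : m → n → m → n → K) (a : m) (b : n) :
    tensorQuadForm T (single a b 1) = T a b a b := by
  simp [tensorQuadForm, single_apply, ite_and]

theorem tensorQuadForm_single_one_add_single_one (T : m → n → m → n → K) (a c : m) (b d : n) :
    tensorQuadForm T (single a b 1 + single c d 1) =
      T a b a b + T a b c d + T c d a b + T c d c d := by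
  simp only [tensorQuadForm, Matrix.add_apply, single_apply, ite_and, mul_add, mul_ite, mul_one,
    mul_zero, Finset.sum_add_distrib, Finset.sum_ite_irrel, Finset.sum_ite_eq, Finset.mem_univ,
    ↓reduceIte, Finset.sum_const_zero]
  ring

theorem eq_zero_of_tensorQuadForm_eq_zero_of_rank_le_two [NeZero (2 : K)]
    {T : m → n → m → n → K} (hsym : ∀ i j k l, T i j k l = T k l i j)
    (hvan : ∀ P : Matrix m n K, P.rank ≤ 2 → tensorQuadForm T P = 0) (a : m) (b : n) (c : m)
    (d : n) : T a b c d = 0 := by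
  have hdiag (i : m) (j : n) : T i j i j = 0 := by
    simpa only [tensorQuadForm_single_one] using
      hvan _ ((rank_single_one_le_one (K := K) i j).trans one_le_two)
  have hpair := hvan _ (rank_single_one_add_single_one_le_two a c b d)
  rw [tensorQuadForm_single_one_add_single_one, hdiag, hdiag, ← hsym a b c d] at hpair
  have h2 : (2 : K) * T a b c d = 0 := by linear_combination hpair
  exact (mul_eq_zero.mp h2).resolve_left two_ne_zero

end TensorQuadForm

/-- There is no nonzero symmetric fourth-order tensor `T′` on 3×3 matrices whose
quadratic form `Σ T′_{ijkl} P_{ij} P_{kl}` vanishes on all matrices of rank ≤ 2: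
if the form vanishes on all rank ≤ 2 matrices then `T′ = 0`. -/
theorem stmt12 (T' : Fin 3 → Fin 3 → Fin 3 → Fin 3 → ℝ)
    (hsym : ∀ i j k l, T' i j k l = T' k l i j)
    (hvan : ∀ P : Matrix (Fin 3) (Fin 3) ℝ, P.rank ≤ 2 →
      ∑ i : Fin 3, ∑ j : Fin 3, ∑ k : Fin 3, ∑ l : Fin 3, T' i j k l * P i j * P k l = 0) :
    ∀ i j k l, T' i j k l = 0 :=
  eq_zero_of_tensorQuadForm_eq_zero_of_rank_le_two hsym hvan
end
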